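/- For n = 3, the group of unipotent ℤ-linear isometries of (M_3, χ_3) is free abelian of rank 2 with basis the shift S : f(t) ↦ f(t+1) and T = id + D^3: every ℤ-module automorphism φ of M_3 with χ_3(φf, φg) = χ_3(f, g) for all f, g and (φ − id)^4 = 0 can be written uniquely as φ = S^a ∘ T^b with a, b ∈ ℤ. (S corresponds to E ↦ E ⊗ O(1) and T to E ↦ E ⊗ (O + O_{P_0}) on K_0(P_3).) -/

import Mathlib

open Polynomial
set_option maxHeartbeats 1600000

/-- `V n`: the real vector space of polynomials in `ℝ[t]` of degree at most `n`. -/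
noncomputable def V (n : ℕ) : Submodule ℝ ℝ[X] := Polynomial.degreeLT ℝ (n + 1)

/-- Differentiation `D : V_n → V_n`. -/
noncomputable def Dop (n : ℕ) : Module.End ℝ (V n) :=
  (Polynomial.derivative (R := ℝ)).restrict (p := V n) (q := V n) fun p hp => by
    rw [V, Polynomial.mem_degreeLT] at hp ⊢
    exact lt_of_le_of_lt Polynomial.degree_derivative_le hp

/-- `γ_m(t) = (t+1)(t+2)⋯(t+m)/m!`. -/
noncomputable def gam (m : ℕ) : ℝ[X] :=
  Polynomial.C ((m.factorial : ℝ))⁻¹ *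
    ∏ i ∈ Finset.range m, (Polynomial.X + Polynomial.C (i + 1 : ℝ))

/-- `χ` is the Euler form: the (unique) bilinear form on `V n` with
`χ(γ_n(t+i), γ_n(t+j)) = C(n+j-i, n)` for `0 ≤ i, j ≤ n` (binomial coefficient,
equal to `0` when `n+j-i < n`). -/
def EulerCond (n : ℕ) (χ : ↥(V n) →ₗ[ℝ] ↥(V n) →ₗ[ℝ] ℝ) : Prop :=
  ∀ (i j : Fin (n + 1)) (f g : V n),
    (f : ℝ[X]) = (gam n).comp (Polynomial.X + Polynomial.C ((i : ℕ) : ℝ)) →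
    (g : ℝ[X]) = (gam n).comp (Polynomial.X + Polynomial.C ((j : ℕ) : ℝ)) →
    χ f g = ((n + (j : ℕ) - (i : ℕ)).choose n : ℝ)

/-- `M n ⊂ V n`: the lattice of integer-valued polynomials of degree at most `n`,
as a `ℤ`-submodule of `ℝ[X]` (identified with the Grothendieck group `K₀(ℙ_n)`). -/
noncomputable def Msub (n : ℕ) : Submodule ℤ ℝ[X] where
  carrier := {p | p.degree < ((n + 1 : ℕ) : WithBot ℕ) ∧
    ∀ m : ℤ, ∃ z : ℤ, p.eval (m : ℝ) = (z : ℝ)}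
  zero_mem' :=
    ⟨lt_of_eq_of_lt Polynomial.degree_zero (WithBot.bot_lt_coe _), fun _ => ⟨0, by simp⟩⟩
  add_mem' := by
    rintro p q ⟨hp1, hp2⟩ ⟨hq1, hq2⟩
    refine ⟨lt_of_le_of_lt (Polynomial.degree_add_le p q) (max_lt hp1 hq1), fun m => ?_⟩
    obtain ⟨z1, hz1⟩ := hp2 m
    obtain ⟨z2, hz2⟩ := hq2 m
    exact ⟨z1 + z2, by simp [hz1, hz2]⟩
  smul_mem' := by
    rintro c p ⟨hp1, hp2⟩
    rw [Set.mem_setOf_eq, zsmul_eq_mul]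
    constructor
    · refine lt_of_le_of_lt (le_trans (Polynomial.degree_mul_le _ _) ?_) hp1
      have h0 : ((c : ℝ[X])).degree ≤ 0 := Polynomial.degree_intCast_le c
      calc (c : ℝ[X]).degree + p.degree ≤ 0 + p.degree := by gcongr
        _ = p.degree := by simp
    · intro m
      obtain ⟨z, hz⟩ := hp2 m
      exact ⟨c * z, by simp [hz]⟩

lemma mem_Msub {n : ℕ} {p : ℝ[X]} :
    p ∈ Msub n ↔ p.degree < ((n + 1 : ℕ) : WithBot ℕ) ∧
      ∀ m : ℤ, ∃ z : ℤ, p.eval (m : ℝ) = (z : ℝ) :=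
  Iff.rfl

/-- The inclusion `M n → V n`. -/
noncomputable def ιMV (n : ℕ) (f : Msub n) : V n :=
  ⟨(f : ℝ[X]), Polynomial.mem_degreeLT.mpr (mem_Msub.mp f.2).1⟩

/-- `φ` is a `ℤ`-linear isometry of the lattice `(M_n, χ_n)`. -/
def IsomM (n : ℕ) (χ : ↥(V n) →ₗ[ℝ] ↥(V n) →ₗ[ℝ] ℝ) (φ : Msub n ≃ₗ[ℤ] Msub n) : Prop :=
  ∀ f g : Msub n, χ (ιMV n (φ f)) (ιMV n (φ g)) = χ (ιMV n f) (ιMV n g)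

/-- `φ` is unipotent: `(φ - id)^(n+1) = 0`. -/
def UnipM (n : ℕ) (φ : Msub n ≃ₗ[ℤ] Msub n) : Prop :=
  ((φ.toLinearMap - LinearMap.id : Module.End ℤ (Msub n)) ^ (n + 1)) = 0


section Aux

open Finset

lemma gam0_eq : gam 0 = 1 := by
  apply Polynomial.funext; intro r
  simp [gam]

lemma gam1_eq : gam 1 = Polynomial.X + Polynomial.C 1 := by
  apply Polynomial.funext; intro r
  simp [gam, Finset.prod_range_succ]

lemma gam2_eq : gam 2 = Polynomial.C (2⁻¹:ℝ) * Polynomial.X^2 + Polynomial.C (2⁻¹*3:ℝ) * Polynomial.X + Polynomial.C 1 := by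
  apply Polynomial.funext; intro r
  simp [gam, Finset.prod_range_succ, Nat.factorial]
  ring

lemma gam3_eq : gam 3 = Polynomial.C (6⁻¹:ℝ) * Polynomial.X^3 + Polynomial.C 1 * Polynomial.X^2 + Polynomial.C (6⁻¹*11:ℝ) * Polynomial.X + Polynomial.C 1 := by
  apply Polynomial.funext; intro r
  simp [gam, Finset.prod_range_succ, Nat.factorial]
  ring

lemma eval_gam3 (r : ℝ) : (gam 3).eval r = 6⁻¹ * ((r+1)*(r+2)*(r+3)) := by
  simp [gam, Finset.prod_range_succ, Nat.factorial]
  ring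

lemma gam_deg (k : Fin 4) : (gam k).degree < ((4:ℕ) : WithBot ℕ) := by
  fin_cases k
  · show (gam 0).degree < _
    rw [gam0_eq]
    exact lt_of_le_of_lt Polynomial.degree_one_le (by norm_num)
  · show (gam 1).degree < _
    rw [gam1_eq]
    refine lt_of_le_of_lt (Polynomial.degree_add_le _ _) ?_
    rw [max_lt_iff]
    exact ⟨by rw [Polynomial.degree_X]; norm_num,
      lt_of_le_of_lt Polynomial.degree_C_le (by norm_num)⟩
  · show (gam 2).degree < _
    rw [gam2_eq]
    exact lt_of_le_of_lt Polynomial.degree_quadratic_le (by norm_num)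
  · show (gam 3).degree < _
    rw [gam3_eq]
    exact lt_of_le_of_lt Polynomial.degree_cubic_le (by norm_num)

lemma dvd6 (m : ℤ) : (6:ℤ) ∣ (m+1)*(m+2)*(m+3) := by
  have := (ZMod.intCast_zmod_eq_zero_iff_dvd ((m+1)*(m+2)*(m+3)) 6).mp
  apply (ZMod.intCast_zmod_eq_zero_iff_dvd ((m+1)*(m+2)*(m+3)) 6).mp
  push_cast
  generalize ((m:ZMod 6)) = x
  revert x; decide

lemma gam_intval (k : Fin 4) (m : ℤ) : ∃ z : ℤ, (gam k).eval (m:ℝ) = (z:ℝ) := by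
  fin_cases k
  · exact ⟨1, by show (gam 0).eval _ = _; rw [gam0_eq]; simp⟩
  · exact ⟨m+1, by show (gam 1).eval _ = _; rw [gam1_eq]; push_cast; simp⟩
  · obtain ⟨r, hr⟩ := Int.even_mul_succ_self (m+1)
    refine ⟨r, ?_⟩
    show (gam 2).eval _ = _
    rw [gam2_eq]
    have : ((m+1)*(m+2) : ℝ) = (r:ℝ) + (r:ℝ) := by
      have h2 : ((m+1)*(m+2) : ℤ) = r + r := by linarith [hr]
      exact_mod_cast congrArg (fun z : ℤ => (z:ℝ)) h2
    simp only [Polynomial.eval_add, Polynomial.eval_mul, Polynomial.eval_pow,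
      Polynomial.eval_C, Polynomial.eval_X]
    nlinarith [this]
  · obtain ⟨q, hq⟩ := dvd6 m
    refine ⟨q, ?_⟩
    show (gam 3).eval _ = _
    rw [eval_gam3]
    have : ((m+1)*(m+2)*(m+3) : ℝ) = 6*(q:ℝ) := by exact_mod_cast congrArg (fun z : ℤ => (z:ℝ)) hq
    push_cast at this ⊢
    rw [this]; ring

lemma gam_mem (k : Fin 4) : gam k ∈ Msub 3 := by
  rw [mem_Msub]
  exact ⟨gam_deg k, gam_intval k⟩

/-- The basis elements of `M₃`. -/
noncomputable def βM : Fin 4 → Msub 3 := fun k => ⟨gam k, gam_mem k⟩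

lemma βM_coe (k : Fin 4) : ((βM k : Msub 3) : ℝ[X]) = gam k := rfl

lemma βM_coe0 : ((βM 0 : Msub 3) : ℝ[X]) = gam 0 := rfl
lemma βM_coe1 : ((βM 1 : Msub 3) : ℝ[X]) = gam 1 := rfl
lemma βM_coe2 : ((βM 2 : Msub 3) : ℝ[X]) = gam 2 := rfl
lemma βM_coe3 : ((βM 3 : Msub 3) : ℝ[X]) = gam 3 := rfl


lemma eval_gam0 (r : ℝ) : (gam 0).eval r = 1 := by rw [gam0_eq]; simp

lemma eval_gam1 (r : ℝ) : (gam 1).eval r = r + 1 := by rw [gam1_eq]; simp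

lemma eval_gam2 (r : ℝ) : (gam 2).eval r = 2⁻¹ * ((r+1)*(r+2)) := by
  rw [gam2_eq]; simp; ring

/-- Expansion of an integer-valued polynomial in the `βM` basis. -/
lemma msub_expand (f : Msub 3) : ∃ c : Fin 4 → ℤ,
    f = ∑ i : Fin 4, c i • βM i := by
  obtain ⟨hdeg, hint⟩ := mem_Msub.mp f.2
  obtain ⟨v0, hv0⟩ := hint (-1)
  obtain ⟨v1, hv1⟩ := hint 0
  obtain ⟨v2, hv2⟩ := hint 1
  obtain ⟨v3, hv3⟩ := hint 2
  push_cast at hv0 hv1 hv2 hv3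
  refine ⟨![v0, -3*v0 + 6*v1 - 4*v2 + v3, 3*v0 - 8*v1 + 7*v2 - 2*v3, -v0 + 3*v1 - 3*v2 + v3], ?_⟩
  rw [Fin.sum_univ_four]
  simp only [Matrix.cons_val_zero, Matrix.cons_val_one, Matrix.head_cons,
    Matrix.cons_val_two, Matrix.tail_cons, Matrix.cons_val_three]
  have hg : f - ((v0:ℤ) • βM 0 + (-3*v0 + 6*v1 - 4*v2 + v3) • βM 1 +
      (3*v0 - 8*v1 + 7*v2 - 2*v3) • βM 2 + (-v0 + 3*v1 - 3*v2 + v3) • βM 3) = 0 := by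
    set g : Msub 3 := f - ((v0:ℤ) • βM 0 + (-3*v0 + 6*v1 - 4*v2 + v3) • βM 1 +
      (3*v0 - 8*v1 + 7*v2 - 2*v3) • βM 2 + (-v0 + 3*v1 - 3*v2 + v3) • βM 3) with hgdef
    have hdq : (g : ℝ[X]).degree < ((3+1:ℕ) : WithBot ℕ) := (mem_Msub.mp g.2).1
    apply Subtype.ext
    show (g : ℝ[X]) = 0
    have hcoe : (g : ℝ[X]) = (f : ℝ[X]) - (((v0:ℤ):ℝ[X]) * gam 0 +
        (((-3*v0 + 6*v1 - 4*v2 + v3 : ℤ)):ℝ[X]) * gam 1 +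
        (((3*v0 - 8*v1 + 7*v2 - 2*v3 : ℤ)):ℝ[X]) * gam 2 +
        (((-v0 + 3*v1 - 3*v2 + v3 : ℤ)):ℝ[X]) * gam 3) := by
      rw [hgdef]
      push_cast [βM_coe0, βM_coe1, βM_coe2, βM_coe3, zsmul_eq_mul]
      ring
    by_cases h0 : (g : ℝ[X]) = 0
    · exact h0
    have hev : ∀ r : ℝ, (g:ℝ[X]).eval r = (f : ℝ[X]).eval r -
        ((v0:ℝ) * (gam 0).eval r + ((-3*v0 + 6*v1 - 4*v2 + v3 : ℤ):ℝ) * (gam 1).eval r +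
         ((3*v0 - 8*v1 + 7*v2 - 2*v3 : ℤ):ℝ) * (gam 2).eval r +
         ((-v0 + 3*v1 - 3*v2 + v3 : ℤ):ℝ) * (gam 3).eval r) := by
      intro r
      rw [hcoe]
      push_cast
      simp
    have heval : ∀ x ∈ ({-1, 0, 1, 2} : Finset ℝ), (g:ℝ[X]).eval x = 0 := by
      intro x hx
      simp only [Finset.mem_insert, Finset.mem_singleton] at hx
      rcases hx with rfl | rfl | rfl | rfl
      · rw [hev]; simp only [eval_gam0, eval_gam1, eval_gam2, eval_gam3, hv0]; push_cast; ring
      · rw [hev]; simp only [eval_gam0, eval_gam1, eval_gam2, eval_gam3, hv1]; push_cast; ring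
      · rw [hev]; simp only [eval_gam0, eval_gam1, eval_gam2, eval_gam3, hv2]; push_cast; ring
      · rw [hev]; simp only [eval_gam0, eval_gam1, eval_gam2, eval_gam3, hv3]; push_cast; ring
    refine Polynomial.eq_zero_of_natDegree_lt_card_of_eval_eq_zero' _ _ heval ?_
    have hcard : ({-1, 0, 1, 2} : Finset ℝ).card = 4 := by norm_num
    rw [hcard]
    exact (Polynomial.natDegree_lt_iff_degree_lt h0).mpr (by exact_mod_cast hdq)
  have key2 := sub_eq_zero.mp hg
  rw [key2]

lemma βM_indep : LinearIndependent ℤ βM := by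
  rw [Fintype.linearIndependent_iff]
  intro c hc
  have hcoe : ((∑ i : Fin 4, c i • βM i : Msub 3) : ℝ[X]) = 0 := by rw [hc]; rfl
  rw [Fin.sum_univ_four] at hcoe
  push_cast at hcoe
  have hev : ∀ r : ℝ, (c 0 : ℝ) * (gam 0).eval r + (c 1 : ℝ) * (gam 1).eval r +
      (c 2 : ℝ) * (gam 2).eval r + (c 3 : ℝ) * (gam 3).eval r = 0 := by
    intro r
    have := congrArg (Polynomial.eval r) hcoe
    simpa [zsmul_eq_mul, βM_coe0, βM_coe1, βM_coe2, βM_coe3] using this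
  have e0 := hev (-1); have e1 := hev 0; have e2 := hev 1; have e3 := hev 2
  simp only [eval_gam0, eval_gam1, eval_gam2, eval_gam3] at e0 e1 e2 e3
  norm_num at e0 e1 e2 e3
  have h0 : (c 0 : ℝ) = 0 := by exact_mod_cast e0
  have h1 : (c 1 : ℝ) = 0 := by linarith
  have h2 : (c 2 : ℝ) = 0 := by linarith
  have h3 : (c 3 : ℝ) = 0 := by linarith
  intro i
  fin_cases i <;> [exact_mod_cast h0; exact_mod_cast h1; exact_mod_cast h2; exact_mod_cast h3]

lemma βM_span : ⊤ ≤ Submodule.span ℤ (Set.range βM) := by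
  intro f _
  obtain ⟨c, hc⟩ := msub_expand f
  rw [Submodule.mem_span_range_iff_exists_fun]
  exact ⟨c, hc.symm⟩

/-- The `ℤ`-basis of `M₃`. -/
noncomputable def BM : Module.Basis (Fin 4) ℤ (Msub 3) := Module.Basis.mk βM_indep βM_span

end Aux



section Chi

open Polynomial

lemma comp_form (c : ℝ) : (gam 3).comp (Polynomial.X + Polynomial.C c) =
    Polynomial.C (6⁻¹:ℝ) * Polynomial.X^3 + Polynomial.C ((3*c+6)/6) * Polynomial.X^2 +
    Polynomial.C ((3*c^2+12*c+11)/6) * Polynomial.X + Polynomial.C ((c^3+6*c^2+11*c+6)/6) := by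
  apply Polynomial.funext; intro r
  simp [Polynomial.eval_comp, eval_gam3]
  ring

/-- The vectors `γ₃(t+i)` in `V 3`. -/
noncomputable def giV : Fin 4 → ↥(V 3) := fun i =>
  ⟨(gam 3).comp (Polynomial.X + Polynomial.C ((i:ℕ) : ℝ)), by
    rw [V, Polynomial.mem_degreeLT, comp_form]
    exact lt_of_le_of_lt Polynomial.degree_cubic_le (by norm_num)⟩

lemma giV_coe (i : Fin 4) :
    ((giV i : ↥(V 3)) : ℝ[X]) = (gam 3).comp (Polynomial.X + Polynomial.C ((i:ℕ) : ℝ)) := rfl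

lemma eval_giV (i : Fin 4) (r : ℝ) : ((giV i : ↥(V 3)) : ℝ[X]).eval r =
    6⁻¹ * ((r + (i:ℕ) + 1) * (r + (i:ℕ) + 2) * (r + (i:ℕ) + 3)) := by
  rw [giV_coe]
  simp [Polynomial.eval_comp, eval_gam3]

/-- The Gram matrix of `χ` in the basis `βM`. -/
noncomputable def GmR : Fin 4 → Fin 4 → ℝ :=
  ![![0,0,0,-1], ![0,0,1,3], ![0,-1,-2,-3], ![1,1,1,1]]

variable (χ : ↥(V 3) →ₗ[ℝ] ↥(V 3) →ₗ[ℝ] ℝ) (hχ : EulerCond 3 χ)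

lemma chi_gi (hχ : EulerCond 3 χ) (i j : Fin 4) :
    χ (giV i) (giV j) = ((3 + (j:ℕ) - (i:ℕ)).choose 3 : ℝ) :=
  hχ i j _ _ rfl rfl

lemma ι_expand0 : ιMV 3 (βM 0) =
    (-1:ℝ) • giV 0 + (3:ℝ) • giV 1 + (-3:ℝ) • giV 2 + (1:ℝ) • giV 3 := by
  apply Subtype.ext
  apply Polynomial.funext; intro r
  push_cast [ιMV, βM_coe0]
  simp only [show ((0:Fin 4):ℕ) = 0 from rfl, show ((1:Fin 4):ℕ) = 1 from rfl,
    show ((2:Fin 4):ℕ) = 2 from rfl, show ((3:Fin 4):ℕ) = 3 from rfl,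
    Polynomial.eval_add, Polynomial.eval_smul, smul_eq_mul, eval_giV, eval_gam0]
  push_cast
  ring

lemma ι_expand1 : ιMV 3 (βM 1) =
    (3:ℝ) • giV 0 + (-8:ℝ) • giV 1 + (7:ℝ) • giV 2 + (-2:ℝ) • giV 3 := by
  apply Subtype.ext
  apply Polynomial.funext; intro r
  push_cast [ιMV, βM_coe1]
  simp only [show ((0:Fin 4):ℕ) = 0 from rfl, show ((1:Fin 4):ℕ) = 1 from rfl,
    show ((2:Fin 4):ℕ) = 2 from rfl, show ((3:Fin 4):ℕ) = 3 from rfl,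
    Polynomial.eval_add, Polynomial.eval_smul, smul_eq_mul, eval_giV, eval_gam1]
  push_cast
  ring

lemma ι_expand2 : ιMV 3 (βM 2) =
    (-3:ℝ) • giV 0 + (6:ℝ) • giV 1 + (-4:ℝ) • giV 2 + (1:ℝ) • giV 3 := by
  apply Subtype.ext
  apply Polynomial.funext; intro r
  push_cast [ιMV, βM_coe2]
  simp only [show ((0:Fin 4):ℕ) = 0 from rfl, show ((1:Fin 4):ℕ) = 1 from rfl,
    show ((2:Fin 4):ℕ) = 2 from rfl, show ((3:Fin 4):ℕ) = 3 from rfl,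
    Polynomial.eval_add, Polynomial.eval_smul, smul_eq_mul, eval_giV, eval_gam2]
  push_cast
  ring

lemma ι_expand3 : ιMV 3 (βM 3) = (1:ℝ) • giV 0 := by
  apply Subtype.ext
  apply Polynomial.funext; intro r
  push_cast [ιMV, βM_coe3]
  simp only [show ((0:Fin 4):ℕ) = 0 from rfl, show ((1:Fin 4):ℕ) = 1 from rfl,
    show ((2:Fin 4):ℕ) = 2 from rfl, show ((3:Fin 4):ℕ) = 3 from rfl,
    Polynomial.eval_add, Polynomial.eval_smul, smul_eq_mul, eval_giV, eval_gam3]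
  push_cast
  ring

lemma hGram (hχ : EulerCond 3 χ) (k l : Fin 4) : χ (ιMV 3 (βM k)) (ιMV 3 (βM l)) = GmR k l := by
  have e0 := ι_expand0; have e1 := ι_expand1; have e2 := ι_expand2; have e3 := ι_expand3
  fin_cases k <;> fin_cases l <;>
    simp only [show (⟨0, by omega⟩ : Fin 4) = 0 from rfl, show (⟨1, by omega⟩ : Fin 4) = 1 from rfl,
      show (⟨2, by omega⟩ : Fin 4) = 2 from rfl, show (⟨3, by omega⟩ : Fin 4) = 3 from rfl,
      e0, e1, e2, e3, map_add, map_smul, LinearMap.add_apply, LinearMap.smul_apply,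
      chi_gi χ hχ, smul_eq_mul] <;>
    (simp only [GmR, Matrix.cons_val]; norm_num [Nat.choose])

/-- The inclusion as an additive hom. -/
noncomputable def ιA : Msub 3 →+ ↥(V 3) where
  toFun := ιMV 3
  map_zero' := rfl
  map_add' f g := rfl

/-- The inclusion as a `ℤ`-linear map. -/
noncomputable def ιL : Msub 3 →ₗ[ℤ] ↥(V 3) := ιA.toIntLinearMap

/-- `χ` as a `ℤ`-bilinear form on `M 3`. -/
noncomputable def chiZ : Msub 3 →ₗ[ℤ] Msub 3 →ₗ[ℤ] ℝ :=
  AddMonoidHom.toIntLinearMap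
    { toFun := fun f => ((χ (ιL f)).toAddMonoidHom.comp ιA).toIntLinearMap
      map_zero' := by
        ext g
        simp [ιL]
      map_add' := by
        intro f₁ f₂
        ext g
        simp [ιL] }

lemma chiZ_apply (f g : Msub 3) : chiZ χ f g = χ (ιMV 3 f) (ιMV 3 g) := rfl

lemma chiZ_basis (hχ : EulerCond 3 χ) (k l : Fin 4) : chiZ χ (βM k) (βM l) = GmR k l := hGram χ hχ k l

end Chi


section ST

open Polynomial

variable (S T : Msub 3 ≃ₗ[ℤ] Msub 3)

lemma S_β0 (hS : ∀ f : Msub 3, ((S f : ℝ[X])) = (f : ℝ[X]).comp (Polynomial.X + 1)) :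
    S (βM 0) = βM 0 := by
  apply Subtype.ext
  rw [hS (βM 0), βM_coe0]
  show _ = gam 0
  apply Polynomial.funext; intro r
  simp [Polynomial.eval_comp, eval_gam0]

lemma S_β1 (hS : ∀ f : Msub 3, ((S f : ℝ[X])) = (f : ℝ[X]).comp (Polynomial.X + 1)) :
    S (βM 1) = βM 0 + βM 1 := by
  apply Subtype.ext
  rw [hS (βM 1), βM_coe1]
  show _ = ((βM 0 + βM 1 : Msub 3) : ℝ[X])
  push_cast [βM_coe0, βM_coe1]
  apply Polynomial.funext; intro r
  simp [Polynomial.eval_comp, eval_gam0, eval_gam1]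
  ring

lemma S_β2 (hS : ∀ f : Msub 3, ((S f : ℝ[X])) = (f : ℝ[X]).comp (Polynomial.X + 1)) :
    S (βM 2) = βM 0 + βM 1 + βM 2 := by
  apply Subtype.ext
  rw [hS (βM 2), βM_coe2]
  show _ = ((βM 0 + βM 1 + βM 2 : Msub 3) : ℝ[X])
  push_cast [βM_coe0, βM_coe1, βM_coe2]
  apply Polynomial.funext; intro r
  simp [Polynomial.eval_comp, eval_gam0, eval_gam1, eval_gam2]
  ring

lemma S_β3 (hS : ∀ f : Msub 3, ((S f : ℝ[X])) = (f : ℝ[X]).comp (Polynomial.X + 1)) :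
    S (βM 3) = βM 0 + βM 1 + βM 2 + βM 3 := by
  apply Subtype.ext
  rw [hS (βM 3), βM_coe3]
  show _ = ((βM 0 + βM 1 + βM 2 + βM 3 : Msub 3) : ℝ[X])
  push_cast [βM_coe0, βM_coe1, βM_coe2, βM_coe3]
  apply Polynomial.funext; intro r
  simp [Polynomial.eval_comp, eval_gam0, eval_gam1, eval_gam2, eval_gam3]
  ring

lemma deriv3_gam3 : (⇑(Polynomial.derivative (R := ℝ)))^[3] (gam 3) = Polynomial.C 1 := by
  have h3 : (⇑(Polynomial.derivative (R := ℝ)))^[3] (gam 3) =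
      Polynomial.derivative (Polynomial.derivative (Polynomial.derivative (gam 3))) := rfl
  rw [h3, gam3_eq]
  simp
  norm_num [← Polynomial.C_mul, ← Polynomial.C_add]
  apply Polynomial.funext; intro r
  norm_num

lemma deriv3_gam2 : (⇑(Polynomial.derivative (R := ℝ)))^[3] (gam 2) = 0 := by
  have h3 : (⇑(Polynomial.derivative (R := ℝ)))^[3] (gam 2) =
      Polynomial.derivative (Polynomial.derivative (Polynomial.derivative (gam 2))) := rfl
  rw [h3, gam2_eq]
  simp

lemma deriv3_gam1 : (⇑(Polynomial.derivative (R := ℝ)))^[3] (gam 1) = 0 := by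
  have h3 : (⇑(Polynomial.derivative (R := ℝ)))^[3] (gam 1) =
      Polynomial.derivative (Polynomial.derivative (Polynomial.derivative (gam 1))) := rfl
  rw [h3, gam1_eq]
  simp

lemma deriv3_gam0 : (⇑(Polynomial.derivative (R := ℝ)))^[3] (gam 0) = 0 := by
  have h3 : (⇑(Polynomial.derivative (R := ℝ)))^[3] (gam 0) =
      Polynomial.derivative (Polynomial.derivative (Polynomial.derivative (gam 0))) := rfl
  rw [h3, gam0_eq]
  simp

lemma T_β0 (hT : ∀ f : Msub 3, ((T f : ℝ[X])) =
    (f : ℝ[X]) + (⇑(Polynomial.derivative (R := ℝ)))^[3] (f : ℝ[X])) :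
    T (βM 0) = βM 0 := by
  apply Subtype.ext
  rw [hT (βM 0), βM_coe0, deriv3_gam0, add_zero]

lemma T_β1 (hT : ∀ f : Msub 3, ((T f : ℝ[X])) =
    (f : ℝ[X]) + (⇑(Polynomial.derivative (R := ℝ)))^[3] (f : ℝ[X])) :
    T (βM 1) = βM 1 := by
  apply Subtype.ext
  rw [hT (βM 1), βM_coe1, deriv3_gam1, add_zero]

lemma T_β2 (hT : ∀ f : Msub 3, ((T f : ℝ[X])) =
    (f : ℝ[X]) + (⇑(Polynomial.derivative (R := ℝ)))^[3] (f : ℝ[X])) :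
    T (βM 2) = βM 2 := by
  apply Subtype.ext
  rw [hT (βM 2), βM_coe2, deriv3_gam2, add_zero]

lemma T_β3 (hT : ∀ f : Msub 3, ((T f : ℝ[X])) =
    (f : ℝ[X]) + (⇑(Polynomial.derivative (R := ℝ)))^[3] (f : ℝ[X])) :
    T (βM 3) = βM 0 + βM 3 := by
  apply Subtype.ext
  rw [hT (βM 3), βM_coe3, deriv3_gam3]
  show _ = ((βM 0 + βM 3 : Msub 3) : ℝ[X])
  push_cast [βM_coe0, βM_coe3]
  rw [gam0_eq, Polynomial.C_1]
  ring

variable (χ : ↥(V 3) →ₗ[ℝ] ↥(V 3) →ₗ[ℝ] ℝ)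

lemma isom_of_basis (hχ : EulerCond 3 χ) (φ : Msub 3 ≃ₗ[ℤ] Msub 3)
    (h : ∀ i j : Fin 4, chiZ χ (φ (βM i)) (φ (βM j)) = GmR i j) : IsomM 3 χ φ := by
  have key : (chiZ χ).compl₁₂ φ.toLinearMap φ.toLinearMap = chiZ χ := by
    apply BM.ext; intro i
    apply BM.ext; intro j
    simp only [LinearMap.compl₁₂_apply, LinearEquiv.coe_coe, BM, Module.Basis.coe_mk]
    rw [h i j, chiZ_basis χ hχ i j]
  intro f g
  have := DFunLike.congr_fun (DFunLike.congr_fun key f) g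
  simpa only [LinearMap.compl₁₂_apply, LinearEquiv.coe_coe, chiZ_apply] using this

lemma isom_S (hχ : EulerCond 3 χ)
    (hS : ∀ f : Msub 3, ((S f : ℝ[X])) = (f : ℝ[X]).comp (Polynomial.X + 1)) :
    IsomM 3 χ S := by
  apply isom_of_basis χ hχ
  intro i j
  fin_cases i <;> fin_cases j <;>
    simp only [show (⟨0, by omega⟩ : Fin 4) = 0 from rfl, show (⟨1, by omega⟩ : Fin 4) = 1 from rfl,
      show (⟨2, by omega⟩ : Fin 4) = 2 from rfl, show (⟨3, by omega⟩ : Fin 4) = 3 from rfl,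
      S_β0 S hS, S_β1 S hS, S_β2 S hS, S_β3 S hS, map_add, LinearMap.add_apply,
      chiZ_basis χ hχ] <;>
    (simp only [GmR, Matrix.cons_val]; norm_num)

lemma isom_T (hχ : EulerCond 3 χ)
    (hT : ∀ f : Msub 3, ((T f : ℝ[X])) =
      (f : ℝ[X]) + (⇑(Polynomial.derivative (R := ℝ)))^[3] (f : ℝ[X])) :
    IsomM 3 χ T := by
  apply isom_of_basis χ hχ
  intro i j
  fin_cases i <;> fin_cases j <;>
    simp only [show (⟨0, by omega⟩ : Fin 4) = 0 from rfl, show (⟨1, by omega⟩ : Fin 4) = 1 from rfl,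
      show (⟨2, by omega⟩ : Fin 4) = 2 from rfl, show (⟨3, by omega⟩ : Fin 4) = 3 from rfl,
      T_β0 T hT, T_β1 T hT, T_β2 T hT, T_β3 T hT, map_add, LinearMap.add_apply,
      chiZ_basis χ hχ] <;>
    (simp only [GmR, Matrix.cons_val]; norm_num)

lemma pow4_apply (A : Module.End ℤ (Msub 3)) (x : Msub 3) :
    (A ^ 4) x = A (A (A (A x))) := by
  simp [pow_succ, Module.End.mul_apply]

lemma unip_S (hS : ∀ f : Msub 3, ((S f : ℝ[X])) = (f : ℝ[X]).comp (Polynomial.X + 1)) :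
    UnipM 3 S := by
  set A : Module.End ℤ (Msub 3) := S.toLinearMap - LinearMap.id with hA
  have a0 : A (βM 0) = 0 := by rw [show A (βM 0) = S (βM 0) - βM 0 from rfl, S_β0 S hS]; abel
  have a1 : A (βM 1) = βM 0 := by rw [show A (βM 1) = S (βM 1) - βM 1 from rfl, S_β1 S hS]; abel
  have a2 : A (βM 2) = βM 0 + βM 1 := by
    rw [show A (βM 2) = S (βM 2) - βM 2 from rfl, S_β2 S hS]; abel
  have a3 : A (βM 3) = βM 0 + βM 1 + βM 2 := by
    rw [show A (βM 3) = S (βM 3) - βM 3 from rfl, S_β3 S hS]; abel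
  show A ^ 4 = 0
  apply BM.ext; intro i
  rw [LinearMap.zero_apply, show (BM i : Msub 3) = βM i from Module.Basis.mk_apply _ _ i, pow4_apply]
  fin_cases i <;>
    simp [show (⟨0, by omega⟩ : Fin 4) = 0 from rfl, show (⟨1, by omega⟩ : Fin 4) = 1 from rfl,
      show (⟨2, by omega⟩ : Fin 4) = 2 from rfl, show (⟨3, by omega⟩ : Fin 4) = 3 from rfl,
      map_add, a0, a1, a2, a3]

lemma unip_T (hT : ∀ f : Msub 3, ((T f : ℝ[X])) =
    (f : ℝ[X]) + (⇑(Polynomial.derivative (R := ℝ)))^[3] (f : ℝ[X])) :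
    UnipM 3 T := by
  set A : Module.End ℤ (Msub 3) := T.toLinearMap - LinearMap.id with hA
  have a0 : A (βM 0) = 0 := by rw [show A (βM 0) = T (βM 0) - βM 0 from rfl, T_β0 T hT]; abel
  have a1 : A (βM 1) = 0 := by rw [show A (βM 1) = T (βM 1) - βM 1 from rfl, T_β1 T hT]; abel
  have a2 : A (βM 2) = 0 := by rw [show A (βM 2) = T (βM 2) - βM 2 from rfl, T_β2 T hT]; abel
  have a3 : A (βM 3) = βM 0 := by
    rw [show A (βM 3) = T (βM 3) - βM 3 from rfl, T_β3 T hT]; abel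
  show A ^ 4 = 0
  apply BM.ext; intro i
  rw [LinearMap.zero_apply, show (BM i : Msub 3) = βM i from Module.Basis.mk_apply _ _ i, pow4_apply]
  fin_cases i <;>
    simp [show (⟨0, by omega⟩ : Fin 4) = 0 from rfl, show (⟨1, by omega⟩ : Fin 4) = 1 from rfl,
      show (⟨2, by omega⟩ : Fin 4) = 2 from rfl, show (⟨3, by omega⟩ : Fin 4) = 3 from rfl,
      map_add, a0, a1, a2, a3]

end ST


section Pow

/-- `a(a+1)/2`. -/
def e2 (a : ℤ) : ℤ := (a*a + a) / 2

/-- `a(a+1)(a+2)/6`. -/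
def e3 (a : ℤ) : ℤ := (a*a*a + 3*a*a + 2*a) / 6

lemma e2_mul (a : ℤ) : 2 * e2 a = a*a + a := by
  have h : (2:ℤ) ∣ a*a + a := by
    obtain ⟨r, hr⟩ := Int.even_mul_succ_self a
    exact ⟨r, by linarith⟩
  exact Int.mul_ediv_cancel' h

lemma e3_mul (a : ℤ) : 6 * e3 a = a*a*a + 3*a*a + 2*a := by
  have h : (6:ℤ) ∣ a*a*a + 3*a*a + 2*a := by
    have h6 := dvd6 (a-1)
    have he : (a-1+1)*(a-1+2)*(a-1+3) = a*a*a + 3*a*a + 2*a := by ring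
    rwa [he] at h6
  exact Int.mul_ediv_cancel' h

lemma e2_succ (a : ℤ) : e2 (a+1) = e2 a + (a+1) := by
  have h1 : 2 * e2 (a+1) = a*a + 3*a + 2 := by linear_combination e2_mul (a+1)
  linarith [e2_mul a]

lemma e2_pred (a : ℤ) : e2 (a-1) = e2 a - a := by
  have h1 : 2 * e2 (a-1) = a*a - a := by linear_combination e2_mul (a-1)
  linarith [e2_mul a]

lemma e3_succ (a : ℤ) : e3 (a+1) = e3 a + e2 a + (a+1) := by
  have h1 : 6 * e3 (a+1) = a*a*a + 6*a*a + 11*a + 6 := by linear_combination e3_mul (a+1)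
  linarith [e3_mul a, e2_mul a]

lemma e3_pred (a : ℤ) : e3 (a-1) = e3 a - e2 a := by
  have h1 : 6 * e3 (a-1) = a*a*a - a := by linear_combination e3_mul (a-1)
  linarith [e3_mul a, e2_mul a]

lemma e2_zero : e2 0 = 0 := rfl
lemma e3_zero : e3 0 = 0 := rfl

lemma equiv_mul_apply (f g : Msub 3 ≃ₗ[ℤ] Msub 3) (x : Msub 3) : (f * g) x = f (g x) := rfl

variable (S T : Msub 3 ≃ₗ[ℤ] Msub 3)

lemma Sinv_β (hS : ∀ f : Msub 3, ((S f : ℝ[X])) = (f : ℝ[X]).comp (Polynomial.X + 1)) :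
    S⁻¹ (βM 0) = βM 0 ∧ S⁻¹ (βM 1) = βM 1 - βM 0 ∧ S⁻¹ (βM 2) = βM 2 - βM 1 ∧
    S⁻¹ (βM 3) = βM 3 - βM 2 := by
  have hinv : (S⁻¹ : Msub 3 ≃ₗ[ℤ] Msub 3) = S.symm := rfl
  rw [hinv]
  refine ⟨?_, ?_, ?_, ?_⟩ <;>
    apply S.injective <;>
    rw [LinearEquiv.apply_symm_apply] <;>
    simp only [map_sub, S_β0 S hS, S_β1 S hS, S_β2 S hS, S_β3 S hS] <;>
    abel

lemma Spow (hS : ∀ f : Msub 3, ((S f : ℝ[X])) = (f : ℝ[X]).comp (Polynomial.X + 1)) (a : ℤ) :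
    (S^a) (βM 0) = βM 0 ∧ (S^a) (βM 1) = a • βM 0 + βM 1 ∧
    (S^a) (βM 2) = e2 a • βM 0 + a • βM 1 + βM 2 ∧
    (S^a) (βM 3) = e3 a • βM 0 + e2 a • βM 1 + a • βM 2 + βM 3 := by
  obtain ⟨v0, v1, v2, v3⟩ := Sinv_β S hS
  induction a using Int.induction_on with
  | zero => simp [e2_zero, e3_zero]
  | succ a ih =>
    obtain ⟨i0, i1, i2, i3⟩ := ih
    have hstep : S^((a:ℤ)+1) = S * S^(a:ℤ) := by
      rw [show ((a:ℤ)+1) = 1 + (a:ℤ) from by ring, zpow_one_add]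
    rw [hstep]
    refine ⟨?_, ?_, ?_, ?_⟩ <;>
      rw [equiv_mul_apply] <;>
      [rw [i0]; rw [i1]; rw [i2]; rw [i3]] <;>
      simp only [map_add, map_smul, S_β0 S hS, S_β1 S hS, S_β2 S hS, S_β3 S hS,
        e2_succ, e3_succ] <;>
      module
  | pred a ih =>
    obtain ⟨i0, i1, i2, i3⟩ := ih
    have hstep : S^(-(a:ℤ)-1) = S⁻¹ * S^(-(a:ℤ)) := by
      rw [show (-(a:ℤ)-1) = -1 + -(a:ℤ) from by ring, zpow_add, zpow_neg_one]
    rw [hstep]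
    refine ⟨?_, ?_, ?_, ?_⟩ <;>
      rw [equiv_mul_apply] <;>
      [rw [i0]; rw [i1]; rw [i2]; rw [i3]] <;>
      simp only [map_add, map_sub, map_smul, v0, v1, v2, v3,
        show e2 (-(a:ℤ)-1) = e2 (-(a:ℤ)) - (-(a:ℤ)) from e2_pred _,
        show e3 (-(a:ℤ)-1) = e3 (-(a:ℤ)) - e2 (-(a:ℤ)) from e3_pred _] <;>
      module

lemma Tinv_β (hT : ∀ f : Msub 3, ((T f : ℝ[X])) =
    (f : ℝ[X]) + (⇑(Polynomial.derivative (R := ℝ)))^[3] (f : ℝ[X])) :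
    T⁻¹ (βM 0) = βM 0 ∧ T⁻¹ (βM 1) = βM 1 ∧ T⁻¹ (βM 2) = βM 2 ∧
    T⁻¹ (βM 3) = βM 3 - βM 0 := by
  have hinv : (T⁻¹ : Msub 3 ≃ₗ[ℤ] Msub 3) = T.symm := rfl
  rw [hinv]
  refine ⟨?_, ?_, ?_, ?_⟩ <;>
    apply T.injective <;>
    rw [LinearEquiv.apply_symm_apply] <;>
    simp only [map_sub, T_β0 T hT, T_β1 T hT, T_β2 T hT, T_β3 T hT] <;>
    abel

lemma Tpow (hT : ∀ f : Msub 3, ((T f : ℝ[X])) =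
    (f : ℝ[X]) + (⇑(Polynomial.derivative (R := ℝ)))^[3] (f : ℝ[X])) (b : ℤ) :
    (T^b) (βM 0) = βM 0 ∧ (T^b) (βM 1) = βM 1 ∧ (T^b) (βM 2) = βM 2 ∧
    (T^b) (βM 3) = b • βM 0 + βM 3 := by
  obtain ⟨w0, w1, w2, w3⟩ := Tinv_β T hT
  induction b using Int.induction_on with
  | zero => simp
  | succ b ih =>
    obtain ⟨i0, i1, i2, i3⟩ := ih
    have hstep : T^((b:ℤ)+1) = T * T^(b:ℤ) := by
      rw [show ((b:ℤ)+1) = 1 + (b:ℤ) from by ring, zpow_one_add]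
    rw [hstep]
    refine ⟨?_, ?_, ?_, ?_⟩ <;>
      rw [equiv_mul_apply] <;>
      [rw [i0]; rw [i1]; rw [i2]; rw [i3]] <;>
      simp only [map_add, map_smul, T_β0 T hT, T_β1 T hT, T_β2 T hT, T_β3 T hT] <;>
      module
  | pred b ih =>
    obtain ⟨i0, i1, i2, i3⟩ := ih
    have hstep : T^(-(b:ℤ)-1) = T⁻¹ * T^(-(b:ℤ)) := by
      rw [show (-(b:ℤ)-1) = -1 + -(b:ℤ) from by ring, zpow_add, zpow_neg_one]
    rw [hstep]
    refine ⟨?_, ?_, ?_, ?_⟩ <;>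
      rw [equiv_mul_apply] <;>
      [rw [i0]; rw [i1]; rw [i2]; rw [i3]] <;>
      simp only [map_add, map_sub, map_smul, w0, w1, w2, w3] <;>
      module

lemma STpow (hS : ∀ f : Msub 3, ((S f : ℝ[X])) = (f : ℝ[X]).comp (Polynomial.X + 1))
    (hT : ∀ f : Msub 3, ((T f : ℝ[X])) =
      (f : ℝ[X]) + (⇑(Polynomial.derivative (R := ℝ)))^[3] (f : ℝ[X])) (a b : ℤ) :
    (S^a * T^b) (βM 0) = βM 0 ∧ (S^a * T^b) (βM 1) = a • βM 0 + βM 1 ∧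
    (S^a * T^b) (βM 2) = e2 a • βM 0 + a • βM 1 + βM 2 ∧
    (S^a * T^b) (βM 3) = (e3 a + b) • βM 0 + e2 a • βM 1 + a • βM 2 + βM 3 := by
  obtain ⟨s0, s1, s2, s3⟩ := Spow S hS a
  obtain ⟨t0, t1, t2, t3⟩ := Tpow T hT b
  refine ⟨?_, ?_, ?_, ?_⟩ <;> rw [equiv_mul_apply]
  · rw [t0, s0]
  · rw [t1, s1]
  · rw [t2, s2]
  · rw [t3, map_add, map_smul, s0, s3]
    module

end Pow


section Classify

open Polynomial

lemma βM_combo_eq_zero {c0 c1 c2 c3 : ℤ}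
    (h : c0 • βM 0 + c1 • βM 1 + c2 • βM 2 + c3 • βM 3 = 0) :
    c0 = 0 ∧ c1 = 0 ∧ c2 = 0 ∧ c3 = 0 := by
  have hz := Fintype.linearIndependent_iff.mp βM_indep ![c0,c1,c2,c3] (by
    rw [Fin.sum_univ_four]
    simpa using h)
  exact ⟨hz 0, hz 1, hz 2, hz 3⟩

lemma βM_combo_inj {c0 c1 c2 c3 d0 d1 d2 d3 : ℤ}
    (h : c0 • βM 0 + c1 • βM 1 + c2 • βM 2 + c3 • βM 3 =
         d0 • βM 0 + d1 • βM 1 + d2 • βM 2 + d3 • βM 3) :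
    c0 = d0 ∧ c1 = d1 ∧ c2 = d2 ∧ c3 = d3 := by
  have h0 : (c0 - d0) • βM 0 + (c1 - d1) • βM 1 + (c2 - d2) • βM 2 + (c3 - d3) • βM 3 = 0 := by
    have hsub := sub_eq_zero.mpr h
    rw [← hsub]
    module
  obtain ⟨h0, h1, h2, h3⟩ := βM_combo_eq_zero h0
  omega

lemma classify (χ : ↥(V 3) →ₗ[ℝ] ↥(V 3) →ₗ[ℝ] ℝ) (hχ : EulerCond 3 χ)
    (S T : Msub 3 ≃ₗ[ℤ] Msub 3)
    (hS : ∀ f : Msub 3, ((S f : ℝ[X])) = (f : ℝ[X]).comp (Polynomial.X + 1))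
    (hT : ∀ f : Msub 3, ((T f : ℝ[X])) =
      (f : ℝ[X]) + (⇑(Polynomial.derivative (R := ℝ)))^[3] (f : ℝ[X]))
    (φ : Msub 3 ≃ₗ[ℤ] Msub 3) (hiso : IsomM 3 χ φ) (huni : UnipM 3 φ) :
    ∃! p : ℤ × ℤ, φ = S ^ p.1 * T ^ p.2 := by
  classical
  have hBM : ∀ j : Fin 4, BM j = βM j := fun j => Module.Basis.mk_apply _ _ j
  set m : Fin 4 → Fin 4 → ℤ := fun i j => BM.repr (φ (βM j)) i with hmdef
  have hφ : ∀ j : Fin 4, φ (βM j) =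
      m 0 j • βM 0 + m 1 j • βM 1 + m 2 j • βM 2 + m 3 j • βM 3 := by
    intro j
    have hs := BM.sum_repr (φ (βM j))
    rw [Fin.sum_univ_four] at hs
    simp only [hBM] at hs
    exact hs.symm
  have hiso' : ∀ k l : Fin 4, chiZ χ (φ (βM k)) (φ (βM l)) = GmR k l := by
    intro k l
    rw [chiZ_apply, hiso (βM k) (βM l)]
    exact hGram χ hχ k l
  -- the symmetrized form vanishes against βM 0
  have hsymm0 : ∀ f : Msub 3, chiZ χ (βM 0) f + chiZ χ f (βM 0) = 0 := by
    have hL : (chiZ χ (βM 0) + (chiZ χ).flip (βM 0) : Msub 3 →ₗ[ℤ] ℝ) = 0 := by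
      apply BM.ext; intro j
      rw [hBM]
      simp only [LinearMap.add_apply, LinearMap.flip_apply, LinearMap.zero_apply,
        chiZ_basis χ hχ]
      fin_cases j <;> (simp only [GmR, Matrix.cons_val]; norm_num)
    intro f
    have hLf := DFunLike.congr_fun hL f
    simpa using hLf
  have hw : ∀ j : Fin 4, chiZ χ (φ (βM 0)) (βM j) + chiZ χ (βM j) (φ (βM 0)) = 0 := by
    intro j
    have h1 : chiZ χ (φ (βM 0)) (φ (φ.symm (βM j))) = chiZ χ (βM 0) (φ.symm (βM j)) := by
      rw [chiZ_apply, chiZ_apply]; exact hiso _ _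
    have h2 : chiZ χ (φ (φ.symm (βM j))) (φ (βM 0)) = chiZ χ (φ.symm (βM j)) (βM 0) := by
      rw [chiZ_apply, chiZ_apply]; exact hiso _ _
    rw [LinearEquiv.apply_symm_apply] at h1 h2
    rw [h1, h2]
    linarith [hsymm0 (φ.symm (βM j))]
  have hwE : ∀ j : Fin 4,
      (m 0 0 : ℝ) * (GmR 0 j + GmR j 0) + (m 1 0 : ℝ) * (GmR 1 j + GmR j 1) +
      (m 2 0 : ℝ) * (GmR 2 j + GmR j 2) + (m 3 0 : ℝ) * (GmR 3 j + GmR j 3) = 0 := by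
    intro j
    have h := hw j
    rw [hφ 0] at h
    simp only [map_add, map_smul, LinearMap.add_apply, LinearMap.smul_apply,
      zsmul_eq_mul, chiZ_basis χ hχ] at h
    linear_combination h
  have F30 : m 3 0 = 0 := by
    have h := hwE 1
    (simp only [GmR, Matrix.cons_val] at h; norm_num at h)
    exact_mod_cast h
  have F20 : m 2 0 = 0 := by
    have h := hwE 2
    (simp only [GmR, Matrix.cons_val] at h; norm_num [F30] at h)
    exact_mod_cast h
  have F10 : m 1 0 = 0 := by
    have h := hwE 3
    (simp only [GmR, Matrix.cons_val] at h; norm_num [F30, F20] at h)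
    exact_mod_cast h
  have E30 : (-1) * (m 0 3 : ℝ) * (m 3 0 : ℝ) + 1 * (m 1 3 : ℝ) * (m 2 0 : ℝ) + 3 * (m 1 3 : ℝ) * (m 3 0 : ℝ) + (-1) * (m 2 3 : ℝ) * (m 1 0 : ℝ) + (-2) * (m 2 3 : ℝ) * (m 2 0 : ℝ) + (-3) * (m 2 3 : ℝ) * (m 3 0 : ℝ) + 1 * (m 3 3 : ℝ) * (m 0 0 : ℝ) + 1 * (m 3 3 : ℝ) * (m 1 0 : ℝ) + 1 * (m 3 3 : ℝ) * (m 2 0 : ℝ) + 1 * (m 3 3 : ℝ) * (m 3 0 : ℝ) = (1 : ℝ) := by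
    have h := hiso' 3 0
    rw [hφ 3, hφ 0] at h
    simp only [map_add, map_smul, LinearMap.add_apply, LinearMap.smul_apply,
      zsmul_eq_mul, chiZ_basis χ hχ] at h
    (simp only [GmR, Matrix.cons_val] at h; norm_num at h)
    linear_combination h
  have E01 : (-1) * (m 0 0 : ℝ) * (m 3 1 : ℝ) + 1 * (m 1 0 : ℝ) * (m 2 1 : ℝ) + 3 * (m 1 0 : ℝ) * (m 3 1 : ℝ) + (-1) * (m 2 0 : ℝ) * (m 1 1 : ℝ) + (-2) * (m 2 0 : ℝ) * (m 2 1 : ℝ) + (-3) * (m 2 0 : ℝ) * (m 3 1 : ℝ) + 1 * (m 3 0 : ℝ) * (m 0 1 : ℝ) + 1 * (m 3 0 : ℝ) * (m 1 1 : ℝ) + 1 * (m 3 0 : ℝ) * (m 2 1 : ℝ) + 1 * (m 3 0 : ℝ) * (m 3 1 : ℝ) = (0 : ℝ) := by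
    have h := hiso' 0 1
    rw [hφ 0, hφ 1] at h
    simp only [map_add, map_smul, LinearMap.add_apply, LinearMap.smul_apply,
      zsmul_eq_mul, chiZ_basis χ hχ] at h
    (simp only [GmR, Matrix.cons_val] at h; norm_num at h)
    linear_combination h
  have E02 : (-1) * (m 0 0 : ℝ) * (m 3 2 : ℝ) + 1 * (m 1 0 : ℝ) * (m 2 2 : ℝ) + 3 * (m 1 0 : ℝ) * (m 3 2 : ℝ) + (-1) * (m 2 0 : ℝ) * (m 1 2 : ℝ) + (-2) * (m 2 0 : ℝ) * (m 2 2 : ℝ) + (-3) * (m 2 0 : ℝ) * (m 3 2 : ℝ) + 1 * (m 3 0 : ℝ) * (m 0 2 : ℝ) + 1 * (m 3 0 : ℝ) * (m 1 2 : ℝ) + 1 * (m 3 0 : ℝ) * (m 2 2 : ℝ) + 1 * (m 3 0 : ℝ) * (m 3 2 : ℝ) = (0 : ℝ) := by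
    have h := hiso' 0 2
    rw [hφ 0, hφ 2] at h
    simp only [map_add, map_smul, LinearMap.add_apply, LinearMap.smul_apply,
      zsmul_eq_mul, chiZ_basis χ hχ] at h
    (simp only [GmR, Matrix.cons_val] at h; norm_num at h)
    linear_combination h
  have E11 : (-1) * (m 0 1 : ℝ) * (m 3 1 : ℝ) + 1 * (m 1 1 : ℝ) * (m 2 1 : ℝ) + 3 * (m 1 1 : ℝ) * (m 3 1 : ℝ) + (-1) * (m 2 1 : ℝ) * (m 1 1 : ℝ) + (-2) * (m 2 1 : ℝ) * (m 2 1 : ℝ) + (-3) * (m 2 1 : ℝ) * (m 3 1 : ℝ) + 1 * (m 3 1 : ℝ) * (m 0 1 : ℝ) + 1 * (m 3 1 : ℝ) * (m 1 1 : ℝ) + 1 * (m 3 1 : ℝ) * (m 2 1 : ℝ) + 1 * (m 3 1 : ℝ) * (m 3 1 : ℝ) = (0 : ℝ) := by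
    have h := hiso' 1 1
    rw [hφ 1] at h
    simp only [map_add, map_smul, LinearMap.add_apply, LinearMap.smul_apply,
      zsmul_eq_mul, chiZ_basis χ hχ] at h
    (simp only [GmR, Matrix.cons_val] at h; norm_num at h)
    linear_combination h
  have E13 : (-1) * (m 0 1 : ℝ) * (m 3 3 : ℝ) + 1 * (m 1 1 : ℝ) * (m 2 3 : ℝ) + 3 * (m 1 1 : ℝ) * (m 3 3 : ℝ) + (-1) * (m 2 1 : ℝ) * (m 1 3 : ℝ) + (-2) * (m 2 1 : ℝ) * (m 2 3 : ℝ) + (-3) * (m 2 1 : ℝ) * (m 3 3 : ℝ) + 1 * (m 3 1 : ℝ) * (m 0 3 : ℝ) + 1 * (m 3 1 : ℝ) * (m 1 3 : ℝ) + 1 * (m 3 1 : ℝ) * (m 2 3 : ℝ) + 1 * (m 3 1 : ℝ) * (m 3 3 : ℝ) = (3 : ℝ) := by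
    have h := hiso' 1 3
    rw [hφ 1, hφ 3] at h
    simp only [map_add, map_smul, LinearMap.add_apply, LinearMap.smul_apply,
      zsmul_eq_mul, chiZ_basis χ hχ] at h
    (simp only [GmR, Matrix.cons_val] at h; norm_num at h)
    linear_combination h
  have E33 : (-1) * (m 0 3 : ℝ) * (m 3 3 : ℝ) + 1 * (m 1 3 : ℝ) * (m 2 3 : ℝ) + 3 * (m 1 3 : ℝ) * (m 3 3 : ℝ) + (-1) * (m 2 3 : ℝ) * (m 1 3 : ℝ) + (-2) * (m 2 3 : ℝ) * (m 2 3 : ℝ) + (-3) * (m 2 3 : ℝ) * (m 3 3 : ℝ) + 1 * (m 3 3 : ℝ) * (m 0 3 : ℝ) + 1 * (m 3 3 : ℝ) * (m 1 3 : ℝ) + 1 * (m 3 3 : ℝ) * (m 2 3 : ℝ) + 1 * (m 3 3 : ℝ) * (m 3 3 : ℝ) = (1 : ℝ) := by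
    have h := hiso' 3 3
    rw [hφ 3] at h
    simp only [map_add, map_smul, LinearMap.add_apply, LinearMap.smul_apply,
      zsmul_eq_mul, chiZ_basis χ hχ] at h
    (simp only [GmR, Matrix.cons_val] at h; norm_num at h)
    linear_combination h
  have E23 : (-1) * (m 0 2 : ℝ) * (m 3 3 : ℝ) + 1 * (m 1 2 : ℝ) * (m 2 3 : ℝ) + 3 * (m 1 2 : ℝ) * (m 3 3 : ℝ) + (-1) * (m 2 2 : ℝ) * (m 1 3 : ℝ) + (-2) * (m 2 2 : ℝ) * (m 2 3 : ℝ) + (-3) * (m 2 2 : ℝ) * (m 3 3 : ℝ) + 1 * (m 3 2 : ℝ) * (m 0 3 : ℝ) + 1 * (m 3 2 : ℝ) * (m 1 3 : ℝ) + 1 * (m 3 2 : ℝ) * (m 2 3 : ℝ) + 1 * (m 3 2 : ℝ) * (m 3 3 : ℝ) = (-3 : ℝ) := by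
    have h := hiso' 2 3
    rw [hφ 2, hφ 3] at h
    simp only [map_add, map_smul, LinearMap.add_apply, LinearMap.smul_apply,
      zsmul_eq_mul, chiZ_basis χ hχ] at h
    (simp only [GmR, Matrix.cons_val] at h; norm_num at h)
    linear_combination h
  have E32 : (-1) * (m 0 3 : ℝ) * (m 3 2 : ℝ) + 1 * (m 1 3 : ℝ) * (m 2 2 : ℝ) + 3 * (m 1 3 : ℝ) * (m 3 2 : ℝ) + (-1) * (m 2 3 : ℝ) * (m 1 2 : ℝ) + (-2) * (m 2 3 : ℝ) * (m 2 2 : ℝ) + (-3) * (m 2 3 : ℝ) * (m 3 2 : ℝ) + 1 * (m 3 3 : ℝ) * (m 0 2 : ℝ) + 1 * (m 3 3 : ℝ) * (m 1 2 : ℝ) + 1 * (m 3 3 : ℝ) * (m 2 2 : ℝ) + 1 * (m 3 3 : ℝ) * (m 3 2 : ℝ) = (1 : ℝ) := by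
    have h := hiso' 3 2
    rw [hφ 3, hφ 2] at h
    simp only [map_add, map_smul, LinearMap.add_apply, LinearMap.smul_apply,
      zsmul_eq_mul, chiZ_basis χ hχ] at h
    (simp only [GmR, Matrix.cons_val] at h; norm_num at h)
    linear_combination h
  -- m00 * m33 = 1
  have F4 : m 0 0 * m 3 3 = 1 := by
    have hR : (m 0 0 : ℝ) * (m 3 3 : ℝ) = 1 := by
      have h := E30
      norm_num [F10, F20, F30] at h
      linear_combination h
    exact_mod_cast hR
  -- nilpotency setup
  set A : Module.End ℤ (Msub 3) := φ.toLinearMap - LinearMap.id with hAdef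
  have hA4 : A ^ 4 = 0 := huni
  have hA4x : ∀ x : Msub 3, A (A (A (A x))) = 0 := by
    intro x
    rw [← pow4_apply, hA4]
    simp
  -- m00 = 1
  have hφ00 : φ (βM 0) = m 0 0 • βM 0 := by
    rw [hφ 0, F10, F20, F30]
    simp
  have F00 : m 0 0 = 1 := by
    have nstep : ∀ c : ℤ, A (c • βM 0) = (c * (m 0 0 - 1)) • βM 0 := by
      intro c
      rw [show A (c • βM 0) = φ (c • βM 0) - c • βM 0 from rfl, map_smul, hφ00]
      module
    have n0 : A (βM 0) = (m 0 0 - 1) • βM 0 := by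
      rw [show A (βM 0) = φ (βM 0) - βM 0 from rfl, hφ00]
      module
    have n4 := hA4x (βM 0)
    rw [n0, nstep, nstep, nstep] at n4
    have h' : ((m 0 0 - 1) * (m 0 0 - 1) * (m 0 0 - 1) * (m 0 0 - 1)) • βM 0 +
        (0:ℤ) • βM 1 + (0:ℤ) • βM 2 + (0:ℤ) • βM 3 = 0 := by
      rw [← n4]
      module
    have hz := (βM_combo_eq_zero h').1
    have hz4 : (m 0 0 - 1) ^ 4 = 0 := by linear_combination hz
    have := pow_eq_zero_iff (by norm_num : (4:ℕ) ≠ 0) |>.mp hz4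
    omega
  have hφ0' : φ (βM 0) = βM 0 := by rw [hφ00, F00, one_smul]
  have F33 : m 3 3 = 1 := by rw [F00] at F4; omega
  -- m31 = m32 = 0
  have F31 : m 3 1 = 0 := by
    have h := E01
    norm_num [F10, F20, F30, F00] at h
    exact_mod_cast h
  have F32 : m 3 2 = 0 := by
    have h := E02
    norm_num [F10, F20, F30, F00] at h
    exact_mod_cast h
  -- m21 = 0
  have F21 : m 2 1 = 0 := by
    have h := E11
    norm_num [F31] at h
    have hsq : (m 2 1 : ℝ) * (m 2 1 : ℝ) = 0 := by linear_combination (-1/2 : ℝ) * h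
    have := mul_self_eq_zero.mp hsq
    exact_mod_cast this
  -- m11 = 1
  have hφ01 : φ (βM 1) = m 0 1 • βM 0 + m 1 1 • βM 1 := by
    rw [hφ 1, F21, F31]
    simp
  have F11 : m 1 1 = 1 := by
    have nstep : ∀ c d : ℤ, A (c • βM 0 + d • βM 1) =
        (d * m 0 1) • βM 0 + (d * (m 1 1 - 1)) • βM 1 := by
      intro c d
      rw [show A (c • βM 0 + d • βM 1) = φ (c • βM 0 + d • βM 1) - (c • βM 0 + d • βM 1) from rfl,
        map_add, map_smul, map_smul, hφ0', hφ01]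
      module
    have n1 : A (βM 1) = m 0 1 • βM 0 + (m 1 1 - 1) • βM 1 := by
      rw [show A (βM 1) = φ (βM 1) - βM 1 from rfl, hφ01]
      module
    have n4 := hA4x (βM 1)
    rw [n1, nstep, nstep, nstep] at n4
    have h' : ((m 1 1 - 1) * (m 1 1 - 1) * (m 1 1 - 1) * m 0 1) • βM 0 +
        ((m 1 1 - 1) * (m 1 1 - 1) * (m 1 1 - 1) * (m 1 1 - 1)) • βM 1 +
        (0:ℤ) • βM 2 + (0:ℤ) • βM 3 = 0 := by
      rw [← n4]
      module
    have hz := (βM_combo_eq_zero h').2.1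
    have hz4 : (m 1 1 - 1) ^ 4 = 0 := by linear_combination hz
    have := pow_eq_zero_iff (by norm_num : (4:ℕ) ≠ 0) |>.mp hz4
    omega
  have hφ01' : φ (βM 1) = m 0 1 • βM 0 + βM 1 := by rw [hφ01, F11, one_smul]
  -- m22 = 1
  have hφ02 : φ (βM 2) = m 0 2 • βM 0 + m 1 2 • βM 1 + m 2 2 • βM 2 := by
    rw [hφ 2, F32]
    simp
  have F22 : m 2 2 = 1 := by
    have nstep : ∀ c d e : ℤ, A (c • βM 0 + d • βM 1 + e • βM 2) =
        (d * m 0 1 + e * m 0 2) • βM 0 + (e * m 1 2) • βM 1 + (e * (m 2 2 - 1)) • βM 2 := by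
      intro c d e
      rw [show A (c • βM 0 + d • βM 1 + e • βM 2) =
        φ (c • βM 0 + d • βM 1 + e • βM 2) - (c • βM 0 + d • βM 1 + e • βM 2) from rfl,
        map_add, map_add, map_smul, map_smul, map_smul, hφ0', hφ01', hφ02]
      module
    have n2 : A (βM 2) = m 0 2 • βM 0 + m 1 2 • βM 1 + (m 2 2 - 1) • βM 2 := by
      rw [show A (βM 2) = φ (βM 2) - βM 2 from rfl, hφ02]
      module
    have n4 := hA4x (βM 2)
    rw [n2, nstep, nstep, nstep] at n4
    have h' : ((m 2 2 - 1) * (m 2 2 - 1) * m 1 2 * m 0 1 +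
          (m 2 2 - 1) * (m 2 2 - 1) * (m 2 2 - 1) * m 0 2) • βM 0 +
        ((m 2 2 - 1) * (m 2 2 - 1) * (m 2 2 - 1) * m 1 2) • βM 1 +
        ((m 2 2 - 1) * (m 2 2 - 1) * (m 2 2 - 1) * (m 2 2 - 1)) • βM 2 + (0:ℤ) • βM 3 = 0 := by
      rw [← n4]
      module
    have hz := (βM_combo_eq_zero h').2.2.1
    have hz4 : (m 2 2 - 1) ^ 4 = 0 := by linear_combination hz
    have := pow_eq_zero_iff (by norm_num : (4:ℕ) ≠ 0) |>.mp hz4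
    omega
  -- remaining Gram relations
  have F01 : m 0 1 = m 2 3 := by
    have h := E13
    norm_num [F10, F20, F30, F21, F31, F11, F33] at h
    have : (m 0 1 : ℝ) = (m 2 3 : ℝ) := by linear_combination -h
    exact_mod_cast this
  have F13 : 2 * m 1 3 = m 2 3 * m 2 3 + m 2 3 := by
    have h := E33
    norm_num [F33] at h
    have : 2 * (m 1 3 : ℝ) = (m 2 3 : ℝ) * (m 2 3 : ℝ) + (m 2 3 : ℝ) := by
      linear_combination (1/2 : ℝ) * h
    exact_mod_cast this
  have F12 : m 1 2 = m 2 3 := by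
    have h1 := E23
    have h2 := E32
    norm_num [F22, F32, F33] at h1 h2
    have : (m 1 2 : ℝ) = (m 2 3 : ℝ) := by linear_combination (1/4 : ℝ) * h1 + (1/4 : ℝ) * h2
    exact_mod_cast this
  have F02 : m 0 2 = m 1 3 := by
    have h2 := E32
    norm_num [F22, F32, F33, F12] at h2
    have hR : (m 0 2 : ℝ) = (m 1 3 : ℝ) := by
      have hF13 : 2 * (m 1 3 : ℝ) = (m 2 3 : ℝ) * (m 2 3 : ℝ) + (m 2 3 : ℝ) := by
        exact_mod_cast F13
      linear_combination h2 - hF13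
    exact_mod_cast hR
  -- assemble
  set a : ℤ := m 2 3 with hadef
  set b : ℤ := m 0 3 - e3 (m 2 3) with hbdef
  have hE2 : m 1 3 = e2 a := by
    have := e2_mul a
    omega
  have hE0 : m 0 3 = e3 a + b := by rw [hbdef]; ring
  obtain ⟨u0, u1, u2, u3⟩ := STpow S T hS hT a b
  have hmain : φ = S ^ a * T ^ b := by
    apply LinearEquiv.toLinearMap_injective
    apply BM.ext
    intro i
    have happ : ∀ (ψ : Msub 3 ≃ₗ[ℤ] Msub 3) (x : Msub 3), ψ.toLinearMap x = ψ x :=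
      fun ψ x => rfl
    rw [hBM, happ, happ]
    fin_cases i
    · rw [show (⟨0, by omega⟩ : Fin 4) = (0 : Fin 4) from rfl, hφ0', u0]
    · rw [show (⟨1, by omega⟩ : Fin 4) = (1 : Fin 4) from rfl, hφ01', u1, F01]
    · rw [show (⟨2, by omega⟩ : Fin 4) = (2 : Fin 4) from rfl, hφ02, u2, F02, F12, F22, hE2,
        one_smul]
    · rw [show (⟨3, by omega⟩ : Fin 4) = (3 : Fin 4) from rfl, hφ 3, u3, F33, hE2, hE0, one_smul]
  refine ⟨(a, b), hmain, ?_⟩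
  rintro ⟨a', b'⟩ hq
  obtain ⟨w0, w1, w2, w3⟩ := STpow S T hS hT a' b'
  have hb1 : a' • βM 0 + βM 1 = a • βM 0 + βM 1 := by
    rw [← w1, ← hq, hφ01', F01]
  have ha' : a' = a := by
    have h' : a' • βM 0 + (1:ℤ) • βM 1 + (0:ℤ) • βM 2 + (0:ℤ) • βM 3 =
        a • βM 0 + (1:ℤ) • βM 1 + (0:ℤ) • βM 2 + (0:ℤ) • βM 3 := by
      simpa using hb1
    exact (βM_combo_inj h').1
  have hb3 : (e3 a' + b') • βM 0 + e2 a' • βM 1 + a' • βM 2 + βM 3 =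
      (e3 a + b) • βM 0 + e2 a • βM 1 + a • βM 2 + βM 3 := by
    rw [← w3, ← hq, hφ 3, F33, hE2, hE0, one_smul]
  have hb' : b' = b := by
    have h' : (e3 a' + b') • βM 0 + e2 a' • βM 1 + a' • βM 2 + (1:ℤ) • βM 3 =
        (e3 a + b) • βM 0 + e2 a • βM 1 + a • βM 2 + (1:ℤ) • βM 3 := by
      simpa using hb3
    have := (βM_combo_inj h').1
    rw [ha'] at this
    omega
  simp [ha', hb']

end Classify

/-- For `n = 3`, the group of unipotent `ℤ`-linear isometries of `(M_3, χ_3)` is free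
abelian of rank 2 with basis the shift `S : f(t) ↦ f(t+1)` and `T = id + D³`:
`S` and `T` are unipotent isometries and every unipotent isometry `φ` can be written
uniquely as `φ = S^a ∘ T^b` with `a, b ∈ ℤ`. (`S` corresponds to `E ↦ E ⊗ O(1)` and
`T` to `E ↦ E ⊗ (O + O_{ℙ_0})` on `K₀(ℙ_3)`.) -/
theorem unipotent_isometries_n_three
    (χ : ↥(V 3) →ₗ[ℝ] ↥(V 3) →ₗ[ℝ] ℝ) (hχ : EulerCond 3 χ)
    (S T : Msub 3 ≃ₗ[ℤ] Msub 3)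
    (hS : ∀ f : Msub 3, ((S f : ℝ[X])) = (f : ℝ[X]).comp (Polynomial.X + 1))
    (hT : ∀ f : Msub 3, ((T f : ℝ[X])) =
      (f : ℝ[X]) + (⇑(Polynomial.derivative (R := ℝ)))^[3] (f : ℝ[X])) :
    (IsomM 3 χ S ∧ UnipM 3 S ∧ IsomM 3 χ T ∧ UnipM 3 T) ∧
    (∀ φ : Msub 3 ≃ₗ[ℤ] Msub 3, IsomM 3 χ φ → UnipM 3 φ →
      ∃! p : ℤ × ℤ, φ = S ^ p.1 * T ^ p.2) := by
  exact ⟨⟨isom_S S χ hχ hS, unip_S S hS, isom_T T χ hχ hT, unip_T T hT⟩,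
    fun φ hiso huni => classify χ hχ S T hS hT φ hiso huni⟩
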